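/- Suppose the formal power series S(y) = Σ_{n≥0} s(n) y^n (coefficients in the ring of formal power series in q and z) satisfies S(y) − (1−yq)S(yq) = yzq·S(yq^k) with s(0)=1, for a positive integer k. Then s(n) = (−1)^n q^{n(n+1)/2} (z;q^{k−1})_n / (q;q)_n for all n ≥ 0. -/

import Mathlib

open scoped BigOperators

/-- The variable `q` in the ring `ℚ[[q,z]]` of formal power series in two variables. -/
noncomputable def qv : MvPowerSeries (Fin 2) ℚ := MvPowerSeries.X 0

/-- The variable `z` in the ring `ℚ[[q,z]]`. -/
noncomputable def zv : MvPowerSeries (Fin 2) ℚ := MvPowerSeries.X 1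

/-!
Comparing coefficients of `yⁿ⁺¹` in the functional equation gives the first-order recurrence
`s(n+1) (1 - qⁿ⁺¹) = -qⁿ⁺¹ (1 - z q^{(k-1)n}) s(n)`, and telescoping it from `s(0) = 1` gives the
closed form; dividing by `(q;q)_n` is legitimate because its constant term is `1`.
-/

open Finset

section

variable {R : Type*} [CommRing R]

def qPochhammer (a q : R) (n : ℕ) : R := ∏ j ∈ range n, (1 - a * q ^ j)

theorem qPochhammer_succ (a q : R) (n : ℕ) :
    qPochhammer a q (n + 1) = qPochhammer a q n * (1 - a * q ^ n) :=
  prod_range_succ _ n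

theorem constantCoeff_qPochhammer {σ : Type*} {a : MvPowerSeries σ R}
    (ha : MvPowerSeries.constantCoeff a = 0) (q : MvPowerSeries σ R) (n : ℕ) :
    MvPowerSeries.constantCoeff (qPochhammer a q n) = 1 := by
  simp [qPochhammer, map_prod, ha]

theorem succ_mul_succ_add_one_div_two (n : ℕ) :
    (n + 1) * (n + 1 + 1) / 2 = n * (n + 1) / 2 + (n + 1) := by
  rw [show (n + 1) * (n + 1 + 1) = n * (n + 1) + (n + 1) * 2 by ring,
    Nat.add_mul_div_right _ _ two_pos]

theorem recurrence_of_qDifference {k : ℕ} (hk : 0 < k) {q z : R} {s : ℕ → R}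
    (hrec : PowerSeries.mk s - (1 - PowerSeries.C q * PowerSeries.X) *
        PowerSeries.mk (fun n => q ^ n * s n) =
      PowerSeries.C (z * q) * PowerSeries.X * PowerSeries.mk (fun n => q ^ (k * n) * s n))
    (n : ℕ) :
    s (n + 1) * (1 - q * q ^ n) = -q ^ (n + 1) * (1 - z * (q ^ (k - 1)) ^ n) * s n := by
  have hc := congrArg (PowerSeries.coeff (n + 1)) hrec
  simp only [map_sub, sub_mul, one_mul, mul_assoc, PowerSeries.coeff_C_mul,
    PowerSeries.coeff_succ_X_mul, PowerSeries.coeff_mk] at hc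
  obtain ⟨k, rfl⟩ : ∃ m, k = m + 1 := ⟨k - 1, by omega⟩
  rw [Nat.add_sub_cancel, ← pow_mul]
  rw [show (k + 1) * n = k * n + n by ring, pow_add] at hc
  linear_combination hc

theorem mul_qPochhammer_eq_of_recurrence {q b c : R} {s : ℕ → R} (h0 : s 0 = 1)
    (hstep : ∀ n, s (n + 1) * (1 - q * q ^ n) = -q ^ (n + 1) * (1 - b * c ^ n) * s n) (n : ℕ) :
    s n * qPochhammer q q n = (-1) ^ n * q ^ (n * (n + 1) / 2) * qPochhammer b c n := by
  induction n with
  | zero => simp [qPochhammer, h0]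
  | succ n ih =>
    calc s (n + 1) * qPochhammer q q (n + 1)
        = s (n + 1) * (1 - q * q ^ n) * qPochhammer q q n := by rw [qPochhammer_succ]; ring
      _ = -q ^ (n + 1) * (1 - b * c ^ n) * (s n * qPochhammer q q n) := by rw [hstep]; ring
      _ = _ := by rw [ih, qPochhammer_succ, succ_mul_succ_add_one_div_two, pow_add]; ring

end

/-- If `S(y) = Σ s(n) yⁿ` (coefficients formal power series in `q, z`) satisfies
`S(y) − (1−yq)S(yq) = yzq·S(yq^k)` and `s(0) = 1`, then
`s(n) = (−1)^n q^{n(n+1)/2} (z;q^{k−1})_n / (q;q)_n`. -/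
theorem solve_q_difference_partitions (k : ℕ) (hk : 0 < k)
    (s : ℕ → MvPowerSeries (Fin 2) ℚ) (h0 : s 0 = 1)
    (hrec : PowerSeries.mk s -
        (1 - PowerSeries.C (R := MvPowerSeries (Fin 2) ℚ) qv * PowerSeries.X) *
          PowerSeries.mk (fun n => qv ^ n * s n) =
      PowerSeries.C (R := MvPowerSeries (Fin 2) ℚ) (zv * qv) * PowerSeries.X *
        PowerSeries.mk (fun n => qv ^ (k * n) * s n)) :
    ∀ n : ℕ, s n = (-1) ^ n * qv ^ (n * (n + 1) / 2) *
      (∏ j ∈ Finset.range n, (1 - zv * qv ^ ((k - 1) * j))) *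
      (∏ j ∈ Finset.range n, (1 - qv ^ (j + 1)))⁻¹ := by
  intro n
  have hq : MvPowerSeries.constantCoeff qv = 0 := by simp [qv]
  have hnum : ∏ j ∈ range n, (1 - zv * qv ^ ((k - 1) * j)) = qPochhammer zv (qv ^ (k - 1)) n := by
    simp only [qPochhammer, pow_mul]
  have hden : ∏ j ∈ range n, (1 - qv ^ (j + 1)) = qPochhammer qv qv n := by
    simp only [qPochhammer, pow_succ']
  rw [hnum, hden, MvPowerSeries.eq_mul_inv_iff_mul_eq (by rw [constantCoeff_qPochhammer hq]; exact one_ne_zero)]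
  exact mul_qPochhammer_eq_of_recurrence h0 (recurrence_of_qDifference hk hrec) n
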